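/- arXiv:2005.00124 — 2 statements merged into one kernel-verified Lean document; each statement's English description precedes it below -/
import Mathlib

section
/- Let (Ω, ℱ, ℙ) be a probability space, let K be a finite index set of size S ≥ 1, let i ∈ K, and let k ≥ 1 be an integer, η ≥ 0, M ≥ 0. Let X_j : Ω → ℝ^d (j ∈ K), G : Ω → ℝ^d, and H_j : Ω → ℝ^d (j ∈ K∖{i}) be random vectors with all squared norms integrable, satisfying E‖X_j‖² ≤ 4·η²·M²·k² for every j ∈ K, E‖G‖² ≤ M², and E‖H_j‖² ≤ M² for every j ∈ K∖{i}. Then E‖(1/S)·Σ_{j∈K} X_j − η·G + (η/S)·Σ_{j∈K∖{i}} H_j‖² ≤ 4·η²·M²·(k + 1)². -/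
/-!
Minkowski's inequality in `L²`. Writing `‖·‖₂ = (E‖·‖²)^{1/2}`, the hypotheses say
`‖X_j‖₂ ≤ 2|η||M|k` and `‖G‖₂, ‖H_j‖₂ ≤ |M|`. Dividing a sum of at most `S` such terms by `S`
keeps the bound, so by the triangle inequality the `L²` norm of the whole combination is at most
`2|η||M|k + |η||M| + |η||M| = 2|η||M|(k + 1)`; squaring gives the claim.
-/

open Finset MeasureTheory

open scoped ENNReal

section
variable {α E : Type*} {m : MeasurableSpace α} {μ : Measure α} [NormedAddCommGroup E]

lemma sq_lpNorm_two {f : α → E} (hf : AEStronglyMeasurable f μ) :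
    lpNorm f 2 μ ^ 2 = ∫ x, ‖f x‖ ^ 2 ∂μ := by
  have hI : 0 ≤ ∫ x, ‖f x‖ ^ 2 ∂μ := integral_nonneg fun x ↦ by positivity
  rw [lpNorm_eq_integral_norm_rpow_toReal two_ne_zero ENNReal.ofNat_ne_top hf]
  simp only [ENNReal.toReal_ofNat, Real.rpow_two]
  exact_mod_cast Real.rpow_inv_natCast_pow hI two_ne_zero

lemma lpNorm_two_le_abs_of_integral_norm_sq_le {f : α → E} (hf : AEStronglyMeasurable f μ)
    {c : ℝ} (h : ∫ x, ‖f x‖ ^ 2 ∂μ ≤ c ^ 2) : lpNorm f 2 μ ≤ |c| := by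
  rw [← sq_lpNorm_two hf] at h
  simpa [abs_of_nonneg lpNorm_nonneg] using sq_le_sq.1 h

variable [NormedSpace ℝ E] {ι : Type*} {p : ℝ≥0∞}

lemma lpNorm_inv_card_smul_sum_le {s t : Finset ι} (hts : t ⊆ s) (hp : 1 ≤ p)
    {f : ι → α → E} (hf : ∀ j ∈ t, MemLp (f j) p μ) {b : ℝ} (hb : 0 ≤ b)
    (hfb : ∀ j ∈ t, lpNorm (f j) p μ ≤ b) :
    lpNorm ((#s : ℝ)⁻¹ • ∑ j ∈ t, f j) p μ ≤ b := by
  have hsum : lpNorm (∑ j ∈ t, f j) p μ ≤ #t * b := by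
    grw [lpNorm_sum_le hf hp, sum_le_card_nsmul t _ b hfb, nsmul_eq_mul]
  have hcard : (#s : ℝ)⁻¹ * #t ≤ 1 :=
    inv_mul_le_one_of_le₀ (by exact_mod_cast card_le_card hts) (Nat.cast_nonneg _)
  rw [lpNorm_const_smul, coe_nnnorm, norm_inv, RCLike.norm_natCast]
  calc (#s : ℝ)⁻¹ * lpNorm (∑ j ∈ t, f j) p μ ≤ (#s : ℝ)⁻¹ * (#t * b) := by gcongr
    _ = (#s : ℝ)⁻¹ * #t * b := by ring
    _ ≤ b := mul_le_of_le_one_left hb hcard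
end

theorem stmt_1_general {d : ℕ} {Ω : Type*} [MeasurableSpace Ω]
    (μ : Measure Ω)
    {ι : Type*} [DecidableEq ι]
    (K : Finset ι) (S : ℕ) (hK : K.card = S)
    (i : ι)
    (k : ℕ) (η M : ℝ)
    (X : ι → Ω → EuclideanSpace ℝ (Fin d)) (G : Ω → EuclideanSpace ℝ (Fin d))
    (H : ι → Ω → EuclideanSpace ℝ (Fin d))
    (hXmem : ∀ j ∈ K, MemLp (X j) 2 μ)
    (hGmem : MemLp G 2 μ)
    (hHmem : ∀ j ∈ K.erase i, MemLp (H j) 2 μ)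
    (hX : ∀ j ∈ K, ∫ ω, ‖X j ω‖ ^ 2 ∂μ ≤ 4 * η ^ 2 * M ^ 2 * (k : ℝ) ^ 2)
    (hG : ∫ ω, ‖G ω‖ ^ 2 ∂μ ≤ M ^ 2)
    (hH : ∀ j ∈ K.erase i, ∫ ω, ‖H j ω‖ ^ 2 ∂μ ≤ M ^ 2) :
    ∫ ω, ‖((S : ℝ))⁻¹ • ∑ j ∈ K, X j ω - η • G ω
        + (η / (S : ℝ)) • ∑ j ∈ K.erase i, H j ω‖ ^ 2 ∂μ
      ≤ 4 * η ^ 2 * M ^ 2 * ((k : ℝ) + 1) ^ 2 := by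
  subst hK
  set A := (#K : ℝ)⁻¹ • ∑ j ∈ K, X j
  set B := (#K : ℝ)⁻¹ • ∑ j ∈ K.erase i, H j
  have hA : MemLp A 2 μ := (memLp_finsetSum' K hXmem).const_smul _
  have hB : MemLp B 2 μ := (memLp_finsetSum' _ hHmem).const_smul _
  have hF : ∀ ω, (#K : ℝ)⁻¹ • ∑ j ∈ K, X j ω - η • G ω
      + (η / #K) • ∑ j ∈ K.erase i, H j ω = (A - η • G + η • B) ω := fun ω ↦ by
    simp [A, B, Finset.sum_apply, smul_smul, div_eq_mul_inv]
  have hXle : ∀ j ∈ K, lpNorm (X j) 2 μ ≤ 2 * |η| * |M| * k := fun j hj ↦ by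
    have h := (hX j hj).trans_eq (show _ = (2 * η * M * k) ^ 2 by ring)
    simpa [abs_mul] using lpNorm_two_le_abs_of_integral_norm_sq_le (hXmem j hj).1 h
  have hAle : lpNorm A 2 μ ≤ 2 * |η| * |M| * k :=
    lpNorm_inv_card_smul_sum_le subset_rfl one_le_two hXmem (by positivity) hXle
  have hBle : lpNorm B 2 μ ≤ |M| :=
    lpNorm_inv_card_smul_sum_le (erase_subset i K) one_le_two hHmem (abs_nonneg M)
      fun j hj ↦ lpNorm_two_le_abs_of_integral_norm_sq_le (hHmem j hj).1 (hH j hj)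
  have hGle : lpNorm G 2 μ ≤ |M| := lpNorm_two_le_abs_of_integral_norm_sq_le hGmem.1 hG
  have hFle : lpNorm (A - η • G + η • B) 2 μ ≤ 2 * |η| * |M| * (k + 1) := by
    grw [lpNorm_add_le (hA.sub (hGmem.const_smul η)) one_le_two, lpNorm_sub_le hA one_le_two,
      lpNorm_const_smul η G, lpNorm_const_smul η B, coe_nnnorm, Real.norm_eq_abs,
      hAle, hGle, hBle]
    linarith
  simp_rw [hF, ← sq_lpNorm_two ((hA.sub (hGmem.const_smul η)).add (hB.const_smul η)).1]
  calc lpNorm (A - η • G + η • B) 2 μ ^ 2 ≤ (2 * |η| * |M| * (k + 1)) ^ 2 :=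
        pow_le_pow_left₀ lpNorm_nonneg hFle 2
    _ = 4 * η ^ 2 * M ^ 2 * ((k : ℝ) + 1) ^ 2 := by simp only [mul_pow, sq_abs]; ring

/-- Inductive step of the lemma bounding `E‖W_t^i − μ_{r_t}‖² ≤ 4η²M²(t − r_t)²`
for WAGMA-SGD. -/
theorem stmt_1 {d : ℕ} {Ω : Type*} [MeasurableSpace Ω]
    (μ : Measure Ω) [IsProbabilityMeasure μ]
    {ι : Type*} [DecidableEq ι]
    (K : Finset ι) (S : ℕ) (hS : 1 ≤ S) (hK : K.card = S)
    (i : ι) (hi : i ∈ K)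
    (k : ℕ) (hk : 1 ≤ k) (η M : ℝ) (hη : 0 ≤ η) (hM : 0 ≤ M)
    (X : ι → Ω → EuclideanSpace ℝ (Fin d)) (G : Ω → EuclideanSpace ℝ (Fin d))
    (H : ι → Ω → EuclideanSpace ℝ (Fin d))
    (hXmem : ∀ j ∈ K, MemLp (X j) 2 μ)
    (hGmem : MemLp G 2 μ)
    (hHmem : ∀ j ∈ K.erase i, MemLp (H j) 2 μ)
    (hX : ∀ j ∈ K, ∫ ω, ‖X j ω‖ ^ 2 ∂μ ≤ 4 * η ^ 2 * M ^ 2 * (k : ℝ) ^ 2)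
    (hG : ∫ ω, ‖G ω‖ ^ 2 ∂μ ≤ M ^ 2)
    (hH : ∀ j ∈ K.erase i, ∫ ω, ‖H j ω‖ ^ 2 ∂μ ≤ M ^ 2) :
    ∫ ω, ‖((S : ℝ))⁻¹ • ∑ j ∈ K, X j ω - η • G ω
        + (η / (S : ℝ)) • ∑ j ∈ K.erase i, H j ω‖ ^ 2 ∂μ
      ≤ 4 * η ^ 2 * M ^ 2 * ((k : ℝ) + 1) ^ 2 :=
  stmt_1_general μ K S hK i k η M X G H hXmem hGmem hHmem hX hG hH
end

section
/- Let n ≥ 1 and 1 ≤ s ≤ n be integers and set P = 2^n, S = 2^s. For any starting iteration t₀ ≥ 0, the union over iterations t = t₀, t₀+1, …, t₀ + ⌈n/s⌉ − 1 of the bit-position sets {(t·s + r) mod n : 0 ≤ r ≤ s−1} equals {0, 1, …, n−1}. Consequently, the subgroup of the XOR group ({0,…,2^n−1}, XOR) generated by {2^{(t·s + r) mod n} : t₀ ≤ t ≤ t₀ + ⌈n/s⌉ − 1, 0 ≤ r ≤ s−1} is the whole group, i.e., the transitive closure of the union of the group equivalence relations of ⌈n/s⌉ = ⌈log_S P⌉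 consecutive iterations relates every pair of processes in {0, …, P−1}. -/
open Finset

private lemma cover_aux (n s : ℕ) (hn : 1 ≤ n) (hs : 1 ≤ s) (t₀ : ℕ) :
    ∀ i < n, ∃ t ∈ Finset.Ico t₀ (t₀ + n ⌈/⌉ s), ∃ r < s, (t * s + r) % n = i := by
  intro i hi
  have hn0 : 0 < n := hn
  have hs0 : 0 < s := hs
  have hns : n ≤ s * (n ⌈/⌉ s) := le_smul_ceilDiv hs0
  set a := t₀ * s with ha
  set k := a + ((i + (n - a % n)) % n) with hk
  have hamod : a % n < n := Nat.mod_lt _ hn0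
  have hdm : n * (a / n) + a % n = a := Nat.div_add_mod a n
  have hkmod : k % n = i := by
    have h1 : (i + (n - a % n)) % n < n := Nat.mod_lt _ hn0
    have h2 : k % n = (a + (i + (n - a % n))) % n := by
      rw [hk, Nat.add_mod_mod]
    have h3 : a + (i + (n - a % n)) = n * (a / n + 1) + i := by
      have hx : n * (a / n + 1) = n * (a / n) + n := by ring
      omega
    rw [h2, h3, Nat.mul_add_mod, Nat.mod_eq_of_lt hi]
  have hklb : a ≤ k := Nat.le_add_right _ _
  have hkub : k < s * (t₀ + n ⌈/⌉ s) := by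
    have h1 : (i + (n - a % n)) % n < n := Nat.mod_lt _ hn0
    have h2 : s * (t₀ + n ⌈/⌉ s) = a + s * (n ⌈/⌉ s) := by rw [ha]; ring
    omega
  refine ⟨k / s, ?_, k % s, Nat.mod_lt _ hs0, ?_⟩
  · rw [Finset.mem_Ico]
    exact ⟨(Nat.le_div_iff_mul_le hs0).2 (by rw [← ha]; exact hklb),
      Nat.div_lt_of_lt_mul hkub⟩
  · have hdk : s * (k / s) + k % s = k := Nat.div_add_mod k s
    have hc : k / s * s = s * (k / s) := Nat.mul_comm _ _
    have : k / s * s + k % s = k := by omega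
    rw [this, hkmod]

private lemma lt_pow_of_testBit_false {x i : ℕ} (h1 : x < 2 ^ (i + 1))
    (h2 : x.testBit i = false) : x < 2 ^ i := by
  rw [Nat.testBit_eq_decide_div_mod_eq] at h2
  simp only [decide_eq_false_iff_not] at h2
  have hd : x / 2 ^ i < 2 := by
    apply Nat.div_lt_of_lt_mul
    rw [pow_succ] at h1
    exact h1
  have hz : x / 2 ^ i = 0 := by
    generalize hgen : x / 2 ^ i = d at h2 hd ⊢
    omega
  have hdm := Nat.div_add_mod x (2 ^ i)
  have hb : 2 ^ i * (x / 2 ^ i) = 0 := by rw [hz, Nat.mul_zero]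
  have hmlt : x % 2 ^ i < 2 ^ i := Nat.mod_lt _ (Nat.two_pow_pos i)
  omega

/-- Over any `⌈n/s⌉ = ⌈log_S P⌉` consecutive iterations, the bit positions used by
the dynamic grouping strategy of WAGMA-SGD cover all of `{0, …, n−1}`; consequently
the transitive closure of the union of the corresponding group equivalence relations
relates every pair of processes in `{0, …, 2^n − 1}` (equivalently, the subgroup of
the XOR group generated by all the generators `2^((t·s + r) mod n)` is the whole
group). -/
theorem stmt_10 (n s : ℕ) (hn : 1 ≤ n) (hs : 1 ≤ s) (hsn : s ≤ n) (t₀ : ℕ)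
    (rel : ℕ → ℕ → Prop)
    (hrel : rel = fun p q => ∃ t ∈ Finset.Ico t₀ (t₀ + n ⌈/⌉ s),
      ∃ r < s, q = p ^^^ 2 ^ ((t * s + r) % n)) :
    ((Finset.Ico t₀ (t₀ + n ⌈/⌉ s)).biUnion
        (fun t => (Finset.range s).image (fun r => (t * s + r) % n)))
      = Finset.range n ∧
    (∀ p < 2 ^ n, ∀ q < 2 ^ n, Relation.EqvGen rel p q) := by
  have cover := cover_aux n s hn hs t₀
  constructor
  · ext i
    simp only [Finset.mem_biUnion, Finset.mem_image, Finset.mem_range, Finset.mem_Ico]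
    constructor
    · rintro ⟨t, ht, r, hr, rfl⟩
      exact Nat.mod_lt _ (by omega)
    · intro hi
      obtain ⟨t, ht, r, hr, hmod⟩ := cover i hi
      exact ⟨t, Finset.mem_Ico.mp ht, r, hr, hmod⟩
  · -- step relation: p ~ p ^^^ 2^i for any i < n
    have step : ∀ p : ℕ, ∀ i < n, rel p (p ^^^ 2 ^ i) := by
      intro p i hi
      obtain ⟨t, ht, r, hr, hmod⟩ := cover i hi
      rw [hrel]
      exact ⟨t, ht, r, hr, by rw [hmod]⟩
    have xorreach : ∀ m : ℕ, m < 2 ^ n → ∀ p : ℕ, Relation.EqvGen rel p (p ^^^ m) := by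
      intro m
      induction m using Nat.strong_induction_on with
      | _ m ih =>
        intro hm p
        rcases Nat.eq_zero_or_pos m with rfl | hm0
        · simpa using Relation.EqvGen.refl p
        · set i := m.log2 with hi
          have hmne : m ≠ 0 := by omega
          have hle : 2 ^ i ≤ m := Nat.log2_self_le hmne
          have hlt : m < 2 ^ (i + 1) := Nat.lt_log2_self
          have hin : i < n := by
            by_contra h
            push_neg at h
            have : 2 ^ n ≤ 2 ^ i := Nat.pow_le_pow_right (by norm_num) h
            omega
          have hbit : m.testBit i = true := by
            rw [Nat.testBit_eq_decide_div_mod_eq]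
            have h1 : 1 * 2 ^ i ≤ m := by omega
            have h2 : m < (1 + 1) * 2 ^ i := by rw [pow_succ] at hlt; omega
            have : m / 2 ^ i = 1 := Nat.div_eq_of_lt_le h1 h2
            simp [this]
          set m' := m ^^^ 2 ^ i with hm'
          have hm'lt : m' < 2 ^ i := by
            apply lt_pow_of_testBit_false
            · exact Nat.xor_lt_two_pow hlt (Nat.pow_lt_pow_right (by norm_num) (Nat.lt_succ_self i))
            · simp [hm', Nat.testBit_xor, hbit, Nat.testBit_two_pow_self]
          have hm'm : m' < m := lt_of_lt_of_le hm'lt hle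
          have h1 : Relation.EqvGen rel p (p ^^^ m') :=
            ih m' hm'm (lt_of_lt_of_le hm'lt (Nat.pow_le_pow_right (by norm_num) hin.le)) p
          have h2 : rel (p ^^^ m') ((p ^^^ m') ^^^ 2 ^ i) := step _ i hin
          have h3 : (p ^^^ m') ^^^ 2 ^ i = p ^^^ m := by
            rw [hm', Nat.xor_assoc, Nat.xor_assoc, Nat.xor_self, Nat.xor_zero]
          exact Relation.EqvGen.trans _ _ _ h1 (h3 ▸ Relation.EqvGen.rel _ _ h2)
    intro p hp q hq
    have h1 : Relation.EqvGen rel p (p ^^^ (p ^^^ q)) :=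
      xorreach _ (Nat.xor_lt_two_pow hp hq) p
    rwa [← Nat.xor_assoc, Nat.xor_self, Nat.zero_xor] at h1
end
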